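/- arXiv:gr-qc/0310074 — 9 statements merged into one kernel-verified Lean document; each statement's English description precedes it below -/
import Mathlib

section
/- Let E be a topological space, let n, k be natural numbers, and let 𝒜 be a set of continuous maps E → (Fin n → ℝ). For x ∈ E let Δ(x) denote the ℝ-linear span in Fin n → ℝ of the set of vectors {f(x) : f ∈ 𝒜}. Then the set {x ∈ E : k ≤ finrank ℝ (Δ(x))} is open in E. -/
/-- the "rank theorem": if `Δ(x)` is the span of the values at `x`
of a family `𝒜` of continuous maps `E → (Fin n → ℝ)`, then the set of points
where `Δ(x)` has dimension at least `k` is open; i.e. `x ↦ dim Δ(x)` is lower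
semicontinuous. -/
theorem stmt1 {E : Type*} [TopologicalSpace E] (n k : ℕ)
    (𝒜 : Set (E → (Fin n → ℝ))) (hcont : ∀ f ∈ 𝒜, Continuous f) :
    IsOpen {x : E |
      k ≤ Module.finrank ℝ (Submodule.span ℝ ((fun f : E → (Fin n → ℝ) => f x) '' 𝒜))} := by
  rw [isOpen_iff_mem_nhds]
  intro x hx
  simp only [Set.mem_setOf_eq] at hx
  -- extract a linearly independent subset spanning Δ(x)
  obtain ⟨b, hb_sub, hb_span, hb_ind⟩ :=
    exists_linearIndependent ℝ ((fun f : E → (Fin n → ℝ) => f x) '' 𝒜)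
  have hbfin : b.Finite := hb_ind.setFinite
  haveI : Fintype b := hbfin.fintype
  have hcard : k ≤ Fintype.card b := by
    have h1 : Module.finrank ℝ (Submodule.span ℝ b) = b.toFinset.card :=
      finrank_span_set_eq_card hb_ind
    have h2 : b.toFinset.card = Fintype.card b := Set.toFinset_card b
    rw [hb_span] at h1
    rw [← h2, ← h1]
    exact hx
  -- choose an embedding of Fin k into b
  obtain ⟨emb⟩ : Nonempty (Fin k ↪ b) := by
    apply Function.Embedding.nonempty_of_card_le
    simpa using hcard
  -- choose functions in 𝒜 realizing the vectors of b
  have hchoice : ∀ i : Fin k, ∃ f ∈ 𝒜, f x = (emb i : Fin n → ℝ) := fun i =>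
    hb_sub (emb i).2
  choose g hg hgx using hchoice
  -- the set where (g i y) are independent is open
  have hopen : IsOpen {y : E | LinearIndependent ℝ (fun i : Fin k => g i y)} := by
    have hc : Continuous fun y : E => fun i : Fin k => g i y :=
      continuous_pi fun i => hcont (g i) (hg i)
    exact isOpen_setOf_linearIndependent.preimage hc
  have hxmem : x ∈ {y : E | LinearIndependent ℝ (fun i : Fin k => g i y)} := by
    simp only [Set.mem_setOf_eq, hgx]
    exact hb_ind.comp (fun i => emb i) emb.injective
  refine Filter.mem_of_superset (hopen.mem_nhds hxmem) ?_
  intro y hy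
  simp only [Set.mem_setOf_eq] at hy ⊢
  have h1 : Module.finrank ℝ (Submodule.span ℝ (Set.range fun i : Fin k => g i y)) = k := by
    rw [finrank_span_eq_card hy, Fintype.card_fin]
  have h2 : Submodule.span ℝ (Set.range fun i : Fin k => g i y) ≤
      Submodule.span ℝ ((fun f : E → (Fin n → ℝ) => f y) '' 𝒜) := by
    apply Submodule.span_mono
    rintro _ ⟨i, rfl⟩
    exact ⟨g i, hg i, rfl⟩
  calc k = _ := h1.symm
    _ ≤ _ := Submodule.finrank_mono h2
end

section
/- Let E be a topological space and let X, Y, Z : E → (Fin 4 → ℝ) be continuous maps. Let S be the set of points x ∈ E such that X(x), Y(x), Z(x) are linearly independent over ℝ and every nonzero vector w in their span satisfies η(w,w) > 0 (i.e., the span is a spacelike 3-dimensional subspace). Then S is open in E. -/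
/-- The Minkowski bilinear form on `ℝ⁴` with signature `(-,+,+,+)`. -/
def eta (v w : Fin 4 → ℝ) : ℝ :=
  -(v 0 * w 0) + v 1 * w 1 + v 2 * w 2 + v 3 * w 3

/-- Sylvester's criterion (sufficiency) for a symmetric 3×3 quadratic form. -/
lemma sylvester3 (a b c d e f x y z : ℝ) (ha : 0 < a)
    (h2 : 0 < a * d - b ^ 2)
    (h3 : 0 < a * d * f - a * e ^ 2 - b ^ 2 * f + 2 * b * c * e - c ^ 2 * d)
    (hne : ¬(x = 0 ∧ y = 0 ∧ z = 0)) :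
    0 < a * x ^ 2 + d * y ^ 2 + f * z ^ 2 + 2 * b * x * y + 2 * c * x * z
      + 2 * e * y * z := by
  set q : ℝ := a * x ^ 2 + d * y ^ 2 + f * z ^ 2 + 2 * b * x * y + 2 * c * x * z
      + 2 * e * y * z with hq
  have hid : a * (a * d - b ^ 2) * q
      = (a * d - b ^ 2) * (a * x + b * y + c * z) ^ 2
        + ((a * d - b ^ 2) * y + (a * e - b * c) * z) ^ 2
        + a * (a * d * f - a * e ^ 2 - b ^ 2 * f + 2 * b * c * e - c ^ 2 * d)
          * z ^ 2 := by
    rw [hq]; ring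
  by_contra hq0
  push_neg at hq0
  have hL : a * (a * d - b ^ 2) * q ≤ 0 := by
    have := mul_pos ha h2
    nlinarith
  rw [hid] at hL
  have t1 : 0 ≤ (a * d - b ^ 2) * (a * x + b * y + c * z) ^ 2 := by positivity
  have t2 : 0 ≤ ((a * d - b ^ 2) * y + (a * e - b * c) * z) ^ 2 := by positivity
  have t3 : 0 ≤ a * (a * d * f - a * e ^ 2 - b ^ 2 * f + 2 * b * c * e
      - c ^ 2 * d) * z ^ 2 := by positivity
  have hz : z = 0 := by
    by_contra hz
    have : 0 < a * (a * d * f - a * e ^ 2 - b ^ 2 * f + 2 * b * c * e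
        - c ^ 2 * d) * z ^ 2 := by positivity
    nlinarith
  subst hz
  have hy : y = 0 := by
    by_contra hy
    have hne0 : (a * d - b ^ 2) * y + (a * e - b * c) * 0 ≠ 0 := by
      simpa using mul_ne_zero h2.ne' hy
    have : 0 < ((a * d - b ^ 2) * y + (a * e - b * c) * 0) ^ 2 := by positivity
    nlinarith
  subst hy
  have hx : x = 0 := by
    by_contra hx
    have hne0 : a * x + b * 0 + c * 0 ≠ 0 := by
      simpa using mul_ne_zero ha.ne' hx
    have : 0 < (a * d - b ^ 2) * (a * x + b * 0 + c * 0) ^ 2 := by positivity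
    nlinarith
  exact hne ⟨hx, rfl, rfl⟩

/-- Pointwise characterization: the triple `(u, v, z)` is independent with
spacelike span iff the three leading principal minors of the Gram matrix of
`eta` are positive. -/
lemma pointwise (u v z : Fin 4 → ℝ) :
    (LinearIndependent ℝ ![u, v, z] ∧
      ∀ w ∈ Submodule.span ℝ ({u, v, z} : Set (Fin 4 → ℝ)),
        w ≠ 0 → 0 < eta w w)
    ↔ (0 < eta u u ∧ 0 < eta u u * eta v v - (eta u v) ^ 2 ∧
        0 < eta u u * eta v v * eta z z - eta u u * (eta v z) ^ 2
          - (eta u v) ^ 2 * eta z z + 2 * eta u v * eta u z * eta v z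
          - (eta u z) ^ 2 * eta v v) := by
  set a := eta u u with haa
  set b := eta u v with hbb
  set c := eta u z with hcc
  set d := eta v v with hdd
  set e := eta v z with hee
  set f := eta z z with hff
  constructor
  · rintro ⟨hli, hsp⟩
    -- a > 0
    have humem : u ∈ Submodule.span ℝ ({u, v, z} : Set (Fin 4 → ℝ)) :=
      Submodule.subset_span (by simp)
    have hvmem : v ∈ Submodule.span ℝ ({u, v, z} : Set (Fin 4 → ℝ)) :=
      Submodule.subset_span (by simp)
    have hzmem : z ∈ Submodule.span ℝ ({u, v, z} : Set (Fin 4 → ℝ)) :=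
      Submodule.subset_span (by simp)
    have hune : u ≠ 0 := by
      have := hli.ne_zero 0
      simpa using this
    have ha : 0 < a := hsp u humem hune
    have hlin := Fintype.linearIndependent_iff.mp hli
    -- second minor
    have h2 : 0 < a * d - b ^ 2 := by
      set w : Fin 4 → ℝ := a • v - b • u with hw
      have hwmem : w ∈ Submodule.span ℝ ({u, v, z} : Set (Fin 4 → ℝ)) :=
        Submodule.sub_mem _ (Submodule.smul_mem _ _ hvmem)
          (Submodule.smul_mem _ _ humem)
      have hwne : w ≠ 0 := by
        intro h0
        have : ∀ i, (![-b, a, 0] : Fin 3 → ℝ) i = 0 := by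
          apply hlin
          have : (-b) • u + a • v + (0:ℝ) • z = 0 := by
            rw [← sub_eq_zero] at h0 ⊢
            simpa [hw, sub_eq_iff_eq_add] using h0.symm ▸ (by
              funext i; simp [hw]; ring)
          simpa [Fin.sum_univ_three] using this
        have := this 1
        simp at this
        exact ha.ne' this
      have hww : eta w w = a * (a * d - b ^ 2) := by
        simp only [hw, haa, hbb, hdd, eta, Pi.sub_apply, Pi.smul_apply,
          smul_eq_mul]
        ring
      have := hsp w hwmem hwne
      nlinarith
    refine ⟨ha, h2, ?_⟩
    -- third minor
    set w : Fin 4 → ℝ := (b * e - c * d) • u + (b * c - a * e) • v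
        + (a * d - b ^ 2) • z with hw
    have hwmem : w ∈ Submodule.span ℝ ({u, v, z} : Set (Fin 4 → ℝ)) :=
      Submodule.add_mem _ (Submodule.add_mem _
        (Submodule.smul_mem _ _ humem) (Submodule.smul_mem _ _ hvmem))
        (Submodule.smul_mem _ _ hzmem)
    have hwne : w ≠ 0 := by
      intro h0
      have h0' : (b * e - c * d) • u + (b * c - a * e) • v
          + (a * d - b ^ 2) • z = 0 := by rw [← hw]; exact h0
      have := hlin ![b * e - c * d, b * c - a * e, a * d - b ^ 2]
        (by simpa [Fin.sum_univ_three] using h0')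
      have := this 2
      simp at this
      exact h2.ne' this
    have hww : eta w w = (a * d - b ^ 2) *
        (a * d * f - a * e ^ 2 - b ^ 2 * f + 2 * b * c * e - c ^ 2 * d) := by
      simp only [hw, haa, hbb, hcc, hdd, hee, hff, eta, Pi.add_apply,
        Pi.smul_apply, smul_eq_mul]
      ring
    have := hsp w hwmem hwne
    nlinarith
  · rintro ⟨ha, h2, h3⟩
    have key : ∀ x y zc : ℝ, ¬(x = 0 ∧ y = 0 ∧ zc = 0) →
        0 < eta (x • u + y • v + zc • z) (x • u + y • v + zc • z) := by
      intro x y zc hne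
      have hq : eta (x • u + y • v + zc • z) (x • u + y • v + zc • z)
          = a * x ^ 2 + d * y ^ 2 + f * zc ^ 2 + 2 * b * x * y
            + 2 * c * x * zc + 2 * e * y * zc := by
        simp only [haa, hbb, hcc, hdd, hee, hff, eta, Pi.add_apply,
          Pi.smul_apply, smul_eq_mul]
        ring
      rw [hq]
      exact sylvester3 a b c d e f x y zc ha h2 (by linarith) hne
    constructor
    · apply Fintype.linearIndependent_iff.mpr
      intro g hg
      have hg' : g 0 • u + g 1 • v + g 2 • z = 0 := by
        simpa [Fin.sum_univ_three] using hg
      by_contra hcon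
      push_neg at hcon
      obtain ⟨i, hi⟩ := hcon
      have hne : ¬(g 0 = 0 ∧ g 1 = 0 ∧ g 2 = 0) := by
        rintro ⟨h0, h1, h2'⟩
        fin_cases i <;> simp_all
      have := key (g 0) (g 1) (g 2) hne
      rw [hg'] at this
      simp [eta] at this
    · intro w hw hwne
      rw [show ({u, v, z} : Set (Fin 4 → ℝ)) = insert u {v, z} from rfl,
        Submodule.mem_span_insert] at hw
      obtain ⟨x, w1, hw1, rfl⟩ := hw
      obtain ⟨y, zc, rfl⟩ := Submodule.mem_span_pair.mp hw1
      have hne : ¬(x = 0 ∧ y = 0 ∧ zc = 0) := by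
        rintro ⟨rfl, rfl, rfl⟩
        simp at hwne
      have := key x y zc hne
      convert this using 2 <;> · funext i; simp; ring

/-- for continuous vector fields `X, Y, Z` on a topological space
`E` with values in Minkowski space, the set of points where `X, Y, Z` are
linearly independent and span a spacelike (3-dimensional) subspace is open. -/
theorem stmt2 {E : Type*} [TopologicalSpace E] (X Y Z : E → (Fin 4 → ℝ))
    (hX : Continuous X) (hY : Continuous Y) (hZ : Continuous Z) :
    IsOpen {x : E | LinearIndependent ℝ ![X x, Y x, Z x] ∧
      ∀ w ∈ Submodule.span ℝ ({X x, Y x, Z x} : Set (Fin 4 → ℝ)),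
        w ≠ 0 → 0 < eta w w} := by
  have hc : ∀ (U V : E → Fin 4 → ℝ), Continuous U → Continuous V →
      Continuous (fun x => eta (U x) (V x)) := by
    intro U V hU hV
    have h : ∀ i : Fin 4, Continuous fun x => U x i :=
      fun i => (continuous_apply i).comp hU
    have h' : ∀ i : Fin 4, Continuous fun x => V x i :=
      fun i => (continuous_apply i).comp hV
    simp only [eta]
    exact ((((h 0).mul (h' 0)).neg.add ((h 1).mul (h' 1))).add
      ((h 2).mul (h' 2))).add ((h 3).mul (h' 3))
  simp only [pointwise]
  have c1 := hc X X hX hX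
  have c2 : Continuous fun x =>
      eta (X x) (X x) * eta (Y x) (Y x) - (eta (X x) (Y x)) ^ 2 :=
    ((hc X X hX hX).mul (hc Y Y hY hY)).sub ((hc X Y hX hY).pow 2)
  have c3 : Continuous fun x =>
      eta (X x) (X x) * eta (Y x) (Y x) * eta (Z x) (Z x)
        - eta (X x) (X x) * (eta (Y x) (Z x)) ^ 2
        - (eta (X x) (Y x)) ^ 2 * eta (Z x) (Z x)
        + 2 * eta (X x) (Y x) * eta (X x) (Z x) * eta (Y x) (Z x)
        - (eta (X x) (Z x)) ^ 2 * eta (Y x) (Y x) := by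
    apply Continuous.sub
    apply Continuous.add
    apply Continuous.sub
    apply Continuous.sub
    · exact ((hc X X hX hX).mul (hc Y Y hY hY)).mul (hc Z Z hZ hZ)
    · exact (hc X X hX hX).mul ((hc Y Z hY hZ).pow 2)
    · exact ((hc X Y hX hY).pow 2).mul (hc Z Z hZ hZ)
    · exact ((continuous_const.mul (hc X Y hX hY)).mul (hc X Z hX hZ)).mul
        (hc Y Z hY hZ)
    · exact ((hc X Z hX hZ).pow 2).mul (hc Y Y hY hY)
  exact (isOpen_lt continuous_const c1).and
    ((isOpen_lt continuous_const c2).and (isOpen_lt continuous_const c3))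
end

section
/- Let U be a 2-dimensional linear subspace of Minkowski space ℝ⁴ such that η(v,v) ≠ 0 for every nonzero v ∈ U (i.e., U contains no null vectors). Then η(v,v) > 0 for every nonzero v ∈ U, i.e., U is spacelike. -/
theorem exists_quadratic_eq_zero_of_pos_of_neg {a c : ℝ} (b : ℝ) (ha : 0 < a) (hc : c < 0) :
    ∃ t, a * (t * t) + b * t + c = 0 :=
  exists_quadratic_eq_zero ha.ne' ⟨√(discrim a b c),
    (Real.mul_self_sqrt (by unfold discrim; nlinarith [sq_nonneg b])).symm⟩

theorem Submodule.exists_mem_ne_zero_apply_eq_zero {K V : Type*} [Field K] [AddCommGroup V]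
    [Module K V] [FiniteDimensional K V] (U : Submodule K V) (hU : 1 < Module.finrank K U)
    (f : V →ₗ[K] K) : ∃ w ∈ U, w ≠ 0 ∧ f w = 0 := by
  have hker : LinearMap.ker (f.domRestrict U) ≠ ⊥ :=
    LinearMap.ker_ne_bot_of_finrank_lt (by rwa [Module.finrank_self])
  obtain ⟨w, hw, hw0⟩ := Submodule.exists_mem_ne_zero_of_ne_bot hker
  exact ⟨w, w.2, by simpa using hw0, hw⟩

theorem eta_self_eq_of_apply_zero_eq_zero {v : Fin 4 → ℝ} (hv : v 0 = 0) :
    eta v v = v 1 ^ 2 + v 2 ^ 2 + v 3 ^ 2 := by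
  simp only [eta, hv]
  ring

theorem eta_self_nonneg_of_apply_zero_eq_zero {v : Fin 4 → ℝ} (hv : v 0 = 0) : 0 ≤ eta v v := by
  rw [eta_self_eq_of_apply_zero_eq_zero hv]
  positivity

theorem eta_self_pos_of_apply_zero_eq_zero {v : Fin 4 → ℝ} (hv : v 0 = 0) (hv0 : v ≠ 0) :
    0 < eta v v := by
  rw [eta_self_eq_of_apply_zero_eq_zero hv]
  obtain ⟨i, hi⟩ := Function.ne_iff.mp hv0
  fin_cases i
  · exact absurd hv hi
  all_goals
    simp only [Fin.mk_one, Fin.reduceFinMk] at hi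
    have := sq_pos_of_ne_zero hi
    positivity

theorem eta_add_smul_self (v w : Fin 4 → ℝ) (t : ℝ) :
    eta (v + t • w) (v + t • w) = eta w w * (t * t) + 2 * eta v w * t + eta v v := by
  simp only [eta, Pi.add_apply, Pi.smul_apply, smul_eq_mul]
  ring

/-- a 2-dimensional subspace of Minkowski space containing no
null vectors is spacelike. -/
theorem stmt3 (U : Submodule ℝ (Fin 4 → ℝ)) (hdim : Module.finrank ℝ U = 2)
    (hnonull : ∀ v ∈ U, v ≠ 0 → eta v v ≠ 0) :
    ∀ v ∈ U, v ≠ 0 → 0 < eta v v := by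
  intro v hv hv0
  by_contra! hle
  have hneg : eta v v < 0 := hle.lt_of_ne (hnonull v hv hv0)
  obtain ⟨w, hwU, hw0, hw⟩ :=
    U.exists_mem_ne_zero_apply_eq_zero (by omega) (LinearMap.proj 0)
  obtain ⟨t, ht⟩ := exists_quadratic_eq_zero_of_pos_of_neg (2 * eta v w)
    (eta_self_pos_of_apply_zero_eq_zero hw hw0) hneg
  have hne : v + t • w ≠ 0 := by
    intro h
    have hv_apply : v 0 = 0 := by
      simpa [show w 0 = 0 from hw] using congrFun h 0
    exact hneg.not_ge (eta_self_nonneg_of_apply_zero_eq_zero hv_apply)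
  exact hnonull _ (U.add_mem hv (U.smul_mem t hwU)) hne (by rw [eta_add_smul_self, ht])
end

section
/- Let k ∈ ℝ⁴ be a nonzero null vector of Minkowski space (k ≠ 0 and η(k,k) = 0). Then the set {F ∈ so(1,3) : F·k ∈ ℝ·k}, consisting of those skew-adjoint matrices mapping k into its own span, is a linear subspace of so(1,3) of dimension 4. -/
open Matrix

attribute [local instance 100] LieRing.ofAssociativeRing

/-- The matrix `diag(-1,1,1,1)` of the Minkowski form. -/
def eta13 : Matrix (Fin 4) (Fin 4) ℝ :=
  Matrix.diagonal ![(-1 : ℝ), 1, 1, 1]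

/-- The Lie algebra `so(1,3)` of matrices `A` with `Aᵀη + ηA = 0`. -/
def so13 : LieSubalgebra ℝ (Matrix (Fin 4) (Fin 4) ℝ) :=
  skewAdjointMatricesLieSubalgebra eta13

/-!
Writing `F ∈ so(1,3)` as a boost `a` plus a rotation `ω` identifies `so(1,3)` with `ℝ³ × ℝ³`.
Since `η(k, Fk) = 0`, the map `F ↦ Fk` misses `e₀` whenever `k₀ ≠ 0`, while on boosts it is
`a ↦ (a·k⃗, k₀ a)`, which is injective; so it has rank 3 and the stabiliser of `k` has
dimension 3. A nonzero null vector has `k₀ ≠ 0`, and the boost with velocity `k⃗ / k₀` maps it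
to itself, so `ℝk` lies in the image and its preimage has dimension `3 + 1 = 4`.
-/

section General

variable {K V W : Type*} [DivisionRing K] [AddCommGroup V] [Module K V] [FiniteDimensional K V]
  [AddCommGroup W] [Module K W]

theorem LinearMap.finrank_comap_of_le_range (f : V →ₗ[K] W) {U : Submodule K W}
    (hU : U ≤ LinearMap.range f) :
    Module.finrank K (U.comap f) = Module.finrank K (LinearMap.ker f) + Module.finrank K U := by
  set g := f.domRestrict (U.comap f)
  have hrange : LinearMap.range g = U := by
    rw [LinearMap.range_domRestrict, Submodule.map_comap_eq, inf_eq_right.2 hU]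
  have hker : Module.finrank K (LinearMap.ker g) = Module.finrank K (LinearMap.ker f) := by
    rw [LinearMap.ker_domRestrict]
    exact (Submodule.comapSubtypeEquivOfLe (LinearMap.ker_le_comap f)).finrank_eq
  rw [← g.finrank_range_add_finrank_ker, hrange, hker, add_comm]

end General

/-- `(a, ω)` is the boost with velocity `a` plus the rotation about the axis `ω`. -/
def lorentzGenerator : (Fin 3 → ℝ) × (Fin 3 → ℝ) →ₗ[ℝ] Matrix (Fin 4) (Fin 4) ℝ where
  toFun p := !![0, p.1 0, p.1 1, p.1 2;
                p.1 0, 0, -p.2 2, p.2 1;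
                p.1 1, p.2 2, 0, -p.2 0;
                p.1 2, -p.2 1, p.2 0, 0]
  map_add' p q := by
    ext i j; fin_cases i <;> fin_cases j <;> simp <;> ring
  map_smul' c p := by
    ext i j; fin_cases i <;> fin_cases j <;> simp

theorem lorentzGenerator_injective : Function.Injective lorentzGenerator := by
  rw [← LinearMap.ker_eq_bot, LinearMap.ker_eq_bot']
  rintro ⟨a, ω⟩ h
  have e : ∀ i j, lorentzGenerator (a, ω) i j = 0 := fun i j => by rw [h]; rfl
  have e01 := e 0 1; have e02 := e 0 2; have e03 := e 0 3
  have e23 := e 2 3; have e13 := e 1 3; have e21 := e 2 1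
  simp [lorentzGenerator] at e01 e02 e03 e23 e13 e21
  ext i <;> fin_cases i <;> simp [*]

theorem lorentzGenerator_mem_so13 (p : (Fin 3 → ℝ) × (Fin 3 → ℝ)) : lorentzGenerator p ∈ so13 := by
  rw [so13, mem_skewAdjointMatricesLieSubalgebra, mem_skewAdjointMatricesSubmodule,
    Matrix.IsSkewAdjoint, Matrix.IsAdjointPair]
  ext i j
  fin_cases i <;> fin_cases j <;> simp [lorentzGenerator, eta13]

theorem eq_lorentzGenerator_of_mem_so13 {F : Matrix (Fin 4) (Fin 4) ℝ} (hF : F ∈ so13) :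
    F = lorentzGenerator (![F 0 1, F 0 2, F 0 3], ![F 3 2, F 1 3, F 2 1]) := by
  rw [so13, mem_skewAdjointMatricesLieSubalgebra, mem_skewAdjointMatricesSubmodule,
    Matrix.IsSkewAdjoint, Matrix.IsAdjointPair] at hF
  have e := fun i j => congrFun (congrFun hF i) j
  simp [eta13, Matrix.mul_diagonal, Matrix.diagonal_mul] at e
  ext i j
  have h := e i j
  fin_cases i <;> fin_cases j <;> simp [lorentzGenerator] at h ⊢ <;> linarith

theorem range_lorentzGenerator : LinearMap.range lorentzGenerator = so13.toSubmodule := by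
  ext F
  refine ⟨?_, fun hF => ⟨_, (eq_lorentzGenerator_of_mem_so13 hF).symm⟩⟩
  rintro ⟨p, rfl⟩
  exact lorentzGenerator_mem_so13 p

theorem lorentzGenerator_mulVec (a ω : Fin 3 → ℝ) (v : Fin 4 → ℝ) :
    lorentzGenerator (a, ω) *ᵥ v =
      ![a 0 * v 1 + a 1 * v 2 + a 2 * v 3, a 0 * v 0 - ω 2 * v 2 + ω 1 * v 3,
        a 1 * v 0 + ω 2 * v 1 - ω 0 * v 3, a 2 * v 0 - ω 1 * v 1 + ω 0 * v 2] := by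
  ext i
  fin_cases i <;> simp [lorentzGenerator, mulVec, dotProduct, Fin.sum_univ_four] <;> ring

theorem eta_lorentzGenerator_mulVec_self (p : (Fin 3 → ℝ) × (Fin 3 → ℝ)) (v : Fin 4 → ℝ) :
    eta v (lorentzGenerator p *ᵥ v) = 0 := by
  rw [lorentzGenerator_mulVec, eta]
  simp only [cons_val_zero, cons_val_one, cons_val]
  ring

theorem apply_zero_ne_zero_of_eta_self_eq_zero {k : Fin 4 → ℝ} (hk : k ≠ 0) (hnull : eta k k = 0) :
    k 0 ≠ 0 := by
  intro h0
  rw [eta, h0] at hnull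
  have h1 : k 1 = 0 := by nlinarith [sq_nonneg (k 1), sq_nonneg (k 2), sq_nonneg (k 3)]
  have h2 : k 2 = 0 := by nlinarith [sq_nonneg (k 1), sq_nonneg (k 2), sq_nonneg (k 3)]
  have h3 : k 3 = 0 := by nlinarith [sq_nonneg (k 1), sq_nonneg (k 2), sq_nonneg (k 3)]
  exact hk (by ext i; fin_cases i <;> assumption)

noncomputable def lorentzGeneratorMulVec (k : Fin 4 → ℝ) :
    (Fin 3 → ℝ) × (Fin 3 → ℝ) →ₗ[ℝ] Fin 4 → ℝ :=
  (Matrix.mulVecBilin ℝ ℝ).flip k ∘ₗ lorentzGenerator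

theorem lorentzGeneratorMulVec_apply (k : Fin 4 → ℝ) (p : (Fin 3 → ℝ) × (Fin 3 → ℝ)) :
    lorentzGeneratorMulVec k p = lorentzGenerator p *ᵥ k :=
  rfl

section TimeComponentNeZero

variable {k : Fin 4 → ℝ}

theorem range_lorentzGeneratorMulVec_ne_top (hk0 : k 0 ≠ 0) :
    LinearMap.range (lorentzGeneratorMulVec k) ≠ ⊤ := by
  rw [Ne, Submodule.eq_top_iff']
  push Not
  refine ⟨Pi.single 0 1, fun ⟨p, hp⟩ => hk0 ?_⟩
  have h := eta_lorentzGenerator_mulVec_self p k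
  rw [← lorentzGeneratorMulVec_apply, hp, eta] at h
  simpa using h

theorem lorentzGeneratorMulVec_comp_inl_injective (hk0 : k 0 ≠ 0) :
    Function.Injective (lorentzGeneratorMulVec k ∘ₗ LinearMap.inl ℝ _ _) := by
  rw [← LinearMap.ker_eq_bot, LinearMap.ker_eq_bot']
  intro a ha
  ext i
  have h := congrFun ha i.succ
  fin_cases i <;> simpa [lorentzGeneratorMulVec_apply, lorentzGenerator_mulVec, hk0] using h

theorem finrank_range_lorentzGeneratorMulVec (hk0 : k 0 ≠ 0) :
    Module.finrank ℝ (LinearMap.range (lorentzGeneratorMulVec k)) = 3 := by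
  have hlt := Submodule.finrank_lt (range_lorentzGeneratorMulVec_ne_top hk0)
  have hge := Submodule.finrank_mono (LinearMap.range_comp_le_range (LinearMap.inl ℝ _ _)
    (lorentzGeneratorMulVec k))
  rw [Module.finrank_fin_fun] at hlt
  rw [LinearMap.finrank_range_of_inj (lorentzGeneratorMulVec_comp_inl_injective hk0),
    Module.finrank_fin_fun] at hge
  omega

theorem finrank_ker_lorentzGeneratorMulVec (hk0 : k 0 ≠ 0) :
    Module.finrank ℝ (LinearMap.ker (lorentzGeneratorMulVec k)) = 3 := by
  have h := (lorentzGeneratorMulVec k).finrank_range_add_finrank_ker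
  rw [finrank_range_lorentzGeneratorMulVec hk0, Module.finrank_prod, Module.finrank_fin_fun] at h
  omega

theorem mem_range_lorentzGeneratorMulVec_self (hk0 : k 0 ≠ 0) (hnull : eta k k = 0) :
    k ∈ LinearMap.range (lorentzGeneratorMulVec k) := by
  refine ⟨(![k 1 / k 0, k 2 / k 0, k 3 / k 0], 0), ?_⟩
  rw [eta] at hnull
  ext i
  fin_cases i <;>
    simp only [lorentzGeneratorMulVec_apply, lorentzGenerator_mulVec, Fin.zero_eta, Fin.mk_one,
      Fin.reduceFinMk, cons_val_zero, cons_val_one, cons_val, Pi.zero_apply, zero_mul, sub_zero,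
      add_zero]
  · field_simp
    linarith
  all_goals exact div_mul_cancel₀ _ hk0

end TimeComponentNeZero

/-- for a nonzero null vector `k`, the set of members of
`so(1,3)` mapping `k` into its own span is a linear subspace of dimension 4. -/
theorem stmt7 (k : Fin 4 → ℝ) (hk : k ≠ 0) (hnull : eta k k = 0) :
    ∃ S : Submodule ℝ (Matrix (Fin 4) (Fin 4) ℝ),
      (S : Set (Matrix (Fin 4) (Fin 4) ℝ)) =
        {F | F ∈ so13 ∧ F.mulVec k ∈ Submodule.span ℝ ({k} : Set (Fin 4 → ℝ))} ∧
      Module.finrank ℝ S = 4 := by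
  have hk0 := apply_zero_ne_zero_of_eta_self_eq_zero hk hnull
  set U := Submodule.span ℝ ({k} : Set (Fin 4 → ℝ))
  refine ⟨(U.comap (lorentzGeneratorMulVec k)).map lorentzGenerator, ?_, ?_⟩
  · ext F
    rw [Set.mem_ofPred_eq, ← LieSubalgebra.mem_toSubmodule, ← range_lorentzGenerator]
    constructor
    · rintro ⟨p, hp, rfl⟩
      exact ⟨⟨p, rfl⟩, hp⟩
    · rintro ⟨⟨p, rfl⟩, hp⟩
      exact ⟨p, hp, rfl⟩
  · have hU : U ≤ LinearMap.range (lorentzGeneratorMulVec k) := by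
      rw [Submodule.span_singleton_le_iff_mem]
      exact mem_range_lorentzGeneratorMulVec_self hk0 hnull
    rw [← (Submodule.equivMapOfInjective _ lorentzGenerator_injective _).finrank_eq,
      LinearMap.finrank_comap_of_le_range _ hU, finrank_ker_lorentzGeneratorMulVec hk0,
      finrank_span_singleton hk]
end

section
/- Let U be a 2-dimensional linear subspace of Minkowski space ℝ⁴ that is null in the sense that U ∩ U^⊥ ≠ {0}, where U^⊥ = {w ∈ ℝ⁴ : η(u,w) = 0 for all u ∈ U}. Then the set of alternating (skew-symmetric) bilinear forms F on ℝ⁴ satisfying F(u,w) = 0 for all u ∈ U and all w ∈ U^⊥ is a linear subspace of dimension 3 of the space of alternating bilinear forms on ℝ⁴. -/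
/-!
A plane `U` of Minkowski space that meets `U^⊥` in a nonzero `v` meets it only in the line `ℝ v`:
two orthogonal null vectors are parallel. Hence there is a basis `(z, w, u, v)` with
`U = ⟨u, v⟩` and `U^⊥ = ⟨w, v⟩`. In this basis a skew form `F` has six free entries, and vanishing
on `U × U^⊥` kills exactly `F(u, w)`, `F(v, w)`, `F(u, v)` (`F(v, v) = 0` by skewness), leaving the
three entries `F(z, w)`, `F(z, u)`, `F(z, v)`.
-/

open Matrix

open Module

section
open Submodule

theorem LinearMap.forall_mem_span_forall_mem_span_eq_zero_iff {R M N P : Type*} [CommSemiring R]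
    [AddCommMonoid M] [AddCommMonoid N] [AddCommMonoid P] [Module R M] [Module R N] [Module R P]
    (B : M →ₗ[R] N →ₗ[R] P) (s : Set M) (t : Set N) :
    (∀ x ∈ span R s, ∀ y ∈ span R t, B x y = 0) ↔ ∀ x ∈ s, ∀ y ∈ t, B x y = 0 :=
  calc (∀ x ∈ span R s, ∀ y ∈ span R t, B x y = 0)
      ↔ ∀ x ∈ span R s, ∀ y ∈ t, B x y = 0 :=
        forall₂_congr fun x _ => span_le (p := LinearMap.ker (B x))
    _ ↔ ∀ y ∈ t, ∀ x ∈ span R s, B.flip y x = 0 := forall₂_comm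
    _ ↔ ∀ y ∈ t, ∀ x ∈ s, B.flip y x = 0 :=
        forall₂_congr fun y _ => span_le (p := LinearMap.ker (B.flip y))
    _ ↔ ∀ x ∈ s, ∀ y ∈ t, B x y = 0 := forall₂_comm

theorem Submodule.exists_linearIndependent_pair_eq_span {K V : Type*} [DivisionRing K]
    [AddCommGroup V] [Module K V] {U : Submodule K V} (hU : finrank K U = 2) {v : V}
    (hv : v ∈ U) (hv0 : v ≠ 0) : ∃ u ∈ U, LinearIndependent K ![u, v] ∧ U = span K {u, v} := by
  have : FiniteDimensional K U := .of_finrank_pos (by omega)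
  obtain ⟨u, hu, hu_notMem⟩ : ∃ u ∈ U, u ∉ K ∙ v := by
    by_contra! h
    have := finrank_mono (show U ≤ K ∙ v from h)
    rw [finrank_span_singleton hv0] at this
    omega
  have hli : LinearIndependent K ![u, v] :=
    linearIndependent_fin2.mpr ⟨hv0, fun a h => hu_notMem (mem_span_singleton.mpr ⟨a, h⟩)⟩
  refine ⟨u, hu, hli, (eq_of_le_of_finrank_le ?_ ?_).symm⟩
  · simpa [span_le, Set.insert_subset_iff] using ⟨hu, hv⟩
  · have := finrank_span_eq_card hli
    rw [range_cons_cons_empty, Fintype.card_fin] at this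
    omega

end

section SkewOfFirstRow
variable {K : Type*} [Field K]

def skewOfFirstRow : (Fin 3 → K) →ₗ[K] Matrix (Fin 4) (Fin 4) K where
  toFun c := !![0, c 0, c 1, c 2; -c 0, 0, 0, 0; -c 1, 0, 0, 0; -c 2, 0, 0, 0]
  map_add' c d := by
    ext i j; fin_cases i <;> fin_cases j <;> simp [add_comm]
  map_smul' a c := by
    ext i j; fin_cases i <;> fin_cases j <;> simp

theorem skewOfFirstRow_injective : Function.Injective (skewOfFirstRow (K := K)) := by
  intro c d h
  ext k
  have := congrFun (congrFun h 0) k.succ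
  fin_cases k <;> simpa [skewOfFirstRow] using this

theorem mem_range_skewOfFirstRow [CharZero K] (G : Matrix (Fin 4) (Fin 4) K) :
    G ∈ LinearMap.range skewOfFirstRow ↔
      Gᵀ = -G ∧ ∀ i ∈ ({2, 3} : Set (Fin 4)), ∀ j ∈ ({1, 3} : Set (Fin 4)), G i j = 0 := by
  constructor
  · rintro ⟨c, rfl⟩
    refine ⟨?_, ?_⟩
    · ext i j; fin_cases i <;> fin_cases j <;> simp [skewOfFirstRow]
    · simp [skewOfFirstRow]
  · rintro ⟨hskew, hzero⟩
    have hG (i j : Fin 4) : G j i = -G i j := by simpa using congrFun (congrFun hskew i) j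
    have hdiag (i : Fin 4) : G i i = 0 := self_eq_neg.mp (hG i i)
    simp only [Set.mem_insert_iff, Set.mem_singleton_iff, forall_eq_or_imp, forall_eq] at hzero
    obtain ⟨⟨h21, h23⟩, h31, -⟩ := hzero
    refine ⟨![G 0 1, G 0 2, G 0 3], ?_⟩
    ext i j
    fin_cases i <;> fin_cases j <;>
      simp [skewOfFirstRow, hdiag, hG 1 0, hG 2 0, hG 3 0, hG 2 1, hG 3 1, hG 2 3, h21, h23, h31]

end SkewOfFirstRow

section FormMatrixInBasis
variable {K ι : Type*} [Field K] [Fintype ι] [DecidableEq ι]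

noncomputable def formMatrixInBasis (b : Basis ι K (ι → K)) : Matrix ι ι K ≃ₗ[K] Matrix ι ι K :=
  Matrix.toBilin'.trans (LinearMap.BilinForm.toMatrix b)

theorem formMatrixInBasis_apply (b : Basis ι K (ι → K)) (F : Matrix ι ι K) (i j : ι) :
    formMatrixInBasis b F i j = b i ⬝ᵥ F *ᵥ b j := by
  simp [formMatrixInBasis, LinearMap.BilinForm.toMatrix_apply, Matrix.toBilin'_apply']

theorem formMatrixInBasis_transpose (b : Basis ι K (ι → K)) (F : Matrix ι ι K) :
    formMatrixInBasis b Fᵀ = (formMatrixInBasis b F)ᵀ := by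
  ext i j
  simp [formMatrixInBasis_apply, dotProduct_mulVec, vecMul_transpose, dotProduct_comm]

theorem transpose_formMatrixInBasis_eq_neg_iff (b : Basis ι K (ι → K)) (F : Matrix ι ι K) :
    (formMatrixInBasis b F)ᵀ = -formMatrixInBasis b F ↔ Fᵀ = -F := by
  rw [← formMatrixInBasis_transpose, ← map_neg, (formMatrixInBasis b).injective.eq_iff]

end FormMatrixInBasis

theorem exists_submodule_skew_vanishing_on_span_pairs {K : Type*} [Field K] [CharZero K]
    (b : Basis (Fin 4) K (Fin 4 → K)) :
    ∃ S : Submodule K (Matrix (Fin 4) (Fin 4) K),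
      (S : Set (Matrix (Fin 4) (Fin 4) K)) =
        {F | Fᵀ = -F ∧ ∀ u ∈ Submodule.span K {b 2, b 3}, ∀ w ∈ Submodule.span K {b 1, b 3},
          u ⬝ᵥ F *ᵥ w = 0} ∧
      finrank K S = 3 := by
  refine ⟨(LinearMap.range skewOfFirstRow).comap (formMatrixInBasis b).toLinearMap, ?_, ?_⟩
  · ext F
    rw [← Set.image_pair, ← Set.image_pair, SetLike.mem_coe, Submodule.mem_comap,
      LinearEquiv.coe_coe, mem_range_skewOfFirstRow, transpose_formMatrixInBasis_eq_neg_iff]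
    simp_rw [Set.mem_ofPred_eq, ← Matrix.toBilin'_apply',
      LinearMap.forall_mem_span_forall_mem_span_eq_zero_iff, Set.forall_mem_image,
      Matrix.toBilin'_apply', formMatrixInBasis_apply]
  · rw [Submodule.comap_equiv_eq_map_symm, LinearEquiv.finrank_map_eq,
      LinearMap.finrank_range_of_inj skewOfFirstRow_injective, finrank_fin_fun]

noncomputable def etaForm : LinearMap.BilinForm ℝ (Fin 4 → ℝ) :=
  Matrix.toBilin' (diagonal ![-1, 1, 1, 1])

theorem etaForm_apply (v w : Fin 4 → ℝ) : etaForm v w = eta v w := by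
  simp [etaForm, Matrix.toBilin'_apply', mulVec_diagonal, dotProduct, Fin.sum_univ_four, eta]

theorem etaForm_nondegenerate : etaForm.Nondegenerate :=
  LinearMap.BilinForm.nondegenerate_toBilin'_of_det_ne_zero' _ (by simp [Fin.prod_univ_four])

theorem eq_zero_of_eta_self_eq_zero {v : Fin 4 → ℝ} (h0 : v 0 = 0) (h : eta v v = 0) : v = 0 := by
  have hsq : v 1 ^ 2 + v 2 ^ 2 + v 3 ^ 2 = 0 := by
    simp only [eta, h0] at h
    linear_combination h
  ext i
  fin_cases i
  · exact h0
  all_goals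
    simp only [Fin.reduceFinMk, Fin.isValue, Pi.zero_apply]
    nlinarith [sq_nonneg (v 1), sq_nonneg (v 2), sq_nonneg (v 3)]

theorem exists_eq_smul_of_eta_eq_zero {a b : Fin 4 → ℝ} (ha : eta a a = 0) (hb : eta b b = 0)
    (hab : eta a b = 0) (hb0 : b ≠ 0) : ∃ t : ℝ, a = t • b := by
  have hb00 : b 0 ≠ 0 := fun h => hb0 (eq_zero_of_eta_self_eq_zero h hb)
  refine ⟨a 0 / b 0, sub_eq_zero.mp (eq_zero_of_eta_self_eq_zero ?_ ?_)⟩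
  · simp [hb00]
  · simp only [eta, Pi.sub_apply, Pi.smul_apply, smul_eq_mul] at ha hb hab ⊢
    linear_combination ha - 2 * (a 0 / b 0) * hab + (a 0 / b 0) ^ 2 * hb

theorem exists_basis_of_null_plane {U : Submodule ℝ (Fin 4 → ℝ)} (hdim : finrank ℝ U = 2)
    {v : Fin 4 → ℝ} (hvU : v ∈ U) (hv0 : v ≠ 0) (hvperp : ∀ u ∈ U, eta u v = 0) :
    ∃ b : Basis (Fin 4) ℝ (Fin 4 → ℝ),
      U = Submodule.span ℝ {b 2, b 3} ∧ etaForm.orthogonal U = Submodule.span ℝ {b 1, b 3} := by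
  set W := etaForm.orthogonal U
  have mem_W (x : Fin 4 → ℝ) : x ∈ W ↔ ∀ u ∈ U, eta u x = 0 := by
    simp [W, LinearMap.BilinForm.mem_orthogonal_iff, etaForm_apply]
  have hWdim : finrank ℝ W = 2 := by
    rw [LinearMap.BilinForm.finrank_orthogonal etaForm_nondegenerate, hdim, finrank_fin_fun]
  obtain ⟨u, -, huv, hU⟩ := U.exists_linearIndependent_pair_eq_span hdim hvU hv0
  obtain ⟨w, hwW, hwv, hW⟩ :=
    W.exists_linearIndependent_pair_eq_span hWdim ((mem_W v).2 hvperp) hv0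
  have hwU : w ∉ U := by
    intro hw
    obtain ⟨t, rfl⟩ := exists_eq_smul_of_eta_eq_zero ((mem_W w).1 hwW w hw) (hvperp v hvU)
      (hvperp w hw) hv0
    exact (linearIndependent_fin2.1 hwv).2 t rfl
  have hwuv : LinearIndependent ℝ ![w, u, v] :=
    linearIndependent_finCons.2 ⟨huv, by rwa [range_cons_cons_empty, ← hU]⟩
  obtain ⟨z, hz⟩ := exists_linearIndependent_cons_of_lt_finrank hwuv (by simp)
  exact ⟨basisOfLinearIndependentOfCardEqFinrank hz (by simp), by simpa, by simpa⟩

/-- if `U` is a null 2-dimensional subspace of Minkowski space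
(i.e. `U` meets its `η`-orthogonal complement nontrivially), then the
alternating bilinear forms `F` (represented by skew-symmetric matrices,
`F(u,w) = u ⬝ᵥ F.mulVec w`) vanishing on all pairs `(u, w)` with `u ∈ U` and
`w ∈ U^⊥` form a linear subspace of dimension 3. -/
theorem stmt11 (U : Submodule ℝ (Fin 4 → ℝ)) (hdim : Module.finrank ℝ U = 2)
    (hnull : ∃ v : Fin 4 → ℝ, v ∈ U ∧ v ≠ 0 ∧ ∀ u ∈ U, eta u v = 0) :
    ∃ S : Submodule ℝ (Matrix (Fin 4) (Fin 4) ℝ),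
      (S : Set (Matrix (Fin 4) (Fin 4) ℝ)) =
        {F | Fᵀ = -F ∧ ∀ u ∈ U, ∀ w : Fin 4 → ℝ,
          (∀ u' ∈ U, eta u' w = 0) → u ⬝ᵥ F.mulVec w = 0} ∧
      Module.finrank ℝ S = 3 := by
  obtain ⟨v, hvU, hv0, hvperp⟩ := hnull
  obtain ⟨b, hU, hW⟩ := exists_basis_of_null_plane hdim hvU hv0 hvperp
  obtain ⟨S, hS, hSdim⟩ := exists_submodule_skew_vanishing_on_span_pairs b
  refine ⟨S, ?_, hSdim⟩
  rw [hS, ← hU, ← hW]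
  simp [LinearMap.BilinForm.mem_orthogonal_iff, etaForm_apply]
end

section
/- Every Lie subalgebra of so(4) that is not equal to so(4) itself has dimension at most 4. -/
open Matrix

attribute [local instance 100] LieRing.ofAssociativeRing

/-- The Lie algebra `so(4)` of `4×4` real skew-symmetric matrices
(`Aᵀ + A = 0`, i.e. skew-adjoint with respect to the identity matrix). -/
def so4 : LieSubalgebra ℝ (Matrix (Fin 4) (Fin 4) ℝ) :=
  skewAdjointMatricesLieSubalgebra (1 : Matrix (Fin 4) (Fin 4) ℝ)

/-!
Let `L` be a finite-dimensional Lie algebra with an anisotropic bilinear form `B` satisfying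
`B ⁅x, y⁆ y = 0`. A subalgebra `𝔥` of codimension one is then the kernel of `B (·) z` for some
`z ∉ 𝔥`; since `B ⁅x, z⁆ z = 0`, every `⁅x, z⁆` lies in `𝔥`, and as `L = 𝔥 + K z`, the whole
derived algebra `⁅L, L⁆` lies in `𝔥`. On `so(n)` over an ordered field, `B X Y = tr (X Yᵀ)` is such
a form, and `so(n)` is perfect for `n ≥ 3` because
`E_ij - E_ji = ⁅E_ik - E_ki, E_kj - E_jk⁆` for distinct `i, j, k`. Since `dim so(4) = 6`, a
subalgebra of dimension `≥ 5` would contain `⁅so(4), so(4)⁆ = so(4)`.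
-/

open Module LieAlgebra.Orthogonal

section CodimOne

variable {K V : Type*} [Field K] [AddCommGroup V] [Module K V] [FiniteDimensional K V]

theorem Submodule.exists_sup_span_eq_top_and_ker_flip_le (B : LinearMap.BilinForm K V)
    (hB : ∀ x, B x x = 0 → x = 0) (W : Submodule K V) (hW : finrank K V ≤ finrank K W + 1) :
    ∃ z, W ⊔ K ∙ z = ⊤ ∧ LinearMap.ker (B.flip z) ≤ W := by
  by_cases hWtop : W = ⊤
  · exact ⟨0, by simp [hWtop], by simp [hWtop]⟩
  have hlt : finrank K W < finrank K V := Submodule.finrank_lt hWtop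
  have hperp : B.orthogonal W ≠ ⊥ := by
    rw [Ne, ← Submodule.finrank_eq_zero (R := K)]
    have := LinearMap.BilinForm.finrank_add_finrank_orthogonal' (B := B) W
    omega
  obtain ⟨z, hz_perp, hz0⟩ := Submodule.exists_mem_ne_zero_of_ne_bot hperp
  have hzz : B z z ≠ 0 := fun h => hz0 (hB z h)
  have hzW : z ∉ W := fun h => hzz (hz_perp z h)
  have hsup : W ⊔ K ∙ z = ⊤ := by
    have hlt' : W < W ⊔ K ∙ z := lt_of_le_of_ne le_sup_left fun h =>
      hzW (h ▸ Submodule.mem_sup_right (Submodule.mem_span_singleton_self z))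
    have := Submodule.finrank_lt_finrank_of_lt hlt'
    have := Submodule.finrank_le (W ⊔ K ∙ z)
    exact Submodule.eq_top_of_finrank_eq (by omega)
  refine ⟨z, hsup, fun v hv => ?_⟩
  obtain ⟨w, hw, _, hc, rfl⟩ := Submodule.mem_sup.1 (hsup ▸ Submodule.mem_top : v ∈ W ⊔ K ∙ z)
  obtain ⟨c, rfl⟩ := Submodule.mem_span_singleton.1 hc
  have hc0 : c * B z z = 0 := by
    simpa [hz_perp w hw] using hv
  rw [(mul_eq_zero.1 hc0).resolve_right hzz, zero_smul, add_zero]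
  exact hw

end CodimOne

section LieCodimOne

variable {K L : Type*} [Field K] [LieRing L] [LieAlgebra K L] [FiniteDimensional K L]

theorem LieSubalgebra.lie_mem_of_finrank_le_succ (B : LinearMap.BilinForm K L)
    (hB : ∀ x, B x x = 0 → x = 0) (hinv : ∀ x y : L, B ⁅x, y⁆ y = 0) (H : LieSubalgebra K L)
    (hH : finrank K L ≤ finrank K H + 1) (x y : L) : ⁅x, y⁆ ∈ H := by
  obtain ⟨z, hsup, hker⟩ := H.toSubmodule.exists_sup_span_eq_top_and_ker_flip_le B hB hH
  have hz : ∀ x, ⁅x, z⁆ ∈ H := fun x => hker (hinv x z)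
  have hdecomp : ∀ x, ∃ w ∈ H, ∃ c : K, w + c • z = x := fun x => by
    obtain ⟨w, hw, _, hc, rfl⟩ := Submodule.mem_sup.1 (hsup ▸ Submodule.mem_top : x ∈ _)
    obtain ⟨c, rfl⟩ := Submodule.mem_span_singleton.1 hc
    exact ⟨w, hw, c, rfl⟩
  obtain ⟨w, hw, c, rfl⟩ := hdecomp x
  obtain ⟨w', hw', c', rfl⟩ := hdecomp y
  have hexpand : ⁅w + c • z, w' + c' • z⁆ = ⁅w, w'⁆ + c' • ⁅w, z⁆ - c • ⁅w', z⁆ := by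
    simp only [lie_add, add_lie, lie_smul, smul_lie, lie_self, smul_zero, add_zero,
      ← lie_skew w' z, smul_neg]
    abel
  rw [hexpand]
  exact H.sub_mem (H.add_mem (H.lie_mem hw hw') (H.smul_mem c' (hz w))) (H.smul_mem c (hz w'))

end LieCodimOne

namespace LieAlgebra.Orthogonal

section Generators

variable {n K : Type*} [DecidableEq n] [Field K]

def skewSingle (i j : n) : Matrix n n K := single i j 1 - single j i 1

theorem skewSingle_mem_so [Fintype n] (i j : n) : skewSingle (K := K) i j ∈ so n K := by
  rw [mem_so, skewSingle, transpose_sub, transpose_single, transpose_single, neg_sub]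

theorem skewSingle_self (i : n) : skewSingle (K := K) i i = 0 := sub_self _

theorem lie_skewSingle_skewSingle [Fintype n] {i j k : n} (hij : i ≠ j) (hki : k ≠ i)
    (hkj : k ≠ j) :
    ⁅(skewSingle i k : Matrix n n K), (skewSingle k j : Matrix n n K)⁆ = skewSingle i j := by
  simp [skewSingle, Ring.lie_def, sub_mul, mul_sub, hij, hki, hkj, hij.symm, hki.symm, hkj.symm]

theorem sum_sum_smul_skewSingle [Fintype n] (A : Matrix n n K) :
    ∑ i, ∑ j, A i j • skewSingle i j = A - Aᵀ := by
  ext a b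
  simp [skewSingle, Matrix.sum_apply, single_apply, smul_sub, Finset.sum_sub_distrib, ite_and]

theorem so_le_of_lie_mem [Fintype n] [CharZero K] (hn : 3 ≤ Fintype.card n)
    (H : Submodule K (Matrix n n K)) (hH : ∀ X ∈ so n K, ∀ Y ∈ so n K, ⁅X, Y⁆ ∈ H) :
    (so n K).toSubmodule ≤ H := by
  have hgen : ∀ i j : n, skewSingle i j ∈ H := by
    intro i j
    obtain rfl | hij := eq_or_ne i j
    · rw [skewSingle_self]
      exact H.zero_mem
    obtain ⟨k, -, hk⟩ := Finset.exists_mem_notMem_of_card_lt_card (s := {i, j})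
      (t := Finset.univ) (Finset.card_le_two.trans_lt (by rw [Finset.card_univ]; omega))
    simp only [Finset.mem_insert, Finset.mem_singleton, not_or] at hk
    rw [← lie_skewSingle_skewSingle hij hk.1 hk.2]
    exact hH _ (skewSingle_mem_so i k) _ (skewSingle_mem_so k j)
  intro A hA
  have hA2 : A = (2 : K)⁻¹ • ∑ i, ∑ j, A i j • skewSingle i j := by
    rw [sum_sum_smul_skewSingle, (mem_so _ _ A).1 hA, sub_neg_eq_add, ← two_smul K, smul_smul,
      inv_mul_cancel₀ two_ne_zero, one_smul]
  rw [hA2]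
  exact H.smul_mem _ (H.sum_mem fun i _ => H.sum_mem fun j _ => H.smul_mem _ (hgen i j))

end Generators

theorem finrank_so_le {n K : Type*} [Fintype n] [LinearOrder n] [Field K] [CharZero K] :
    finrank K (so n K) ≤ Fintype.card {p : n × n // p.1 < p.2} := by
  let f : so n K →ₗ[K] ({p : n × n // p.1 < p.2} → K) :=
    { toFun := fun A p => (A : Matrix n n K) p.1.1 p.1.2
      map_add' := fun _ _ => rfl
      map_smul' := fun _ _ => rfl }
  have hf : Function.Injective f := by
    rw [← LinearMap.ker_eq_bot, LinearMap.ker_eq_bot']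
    intro ⟨A, hA⟩ h0
    have hskew : ∀ i j, A j i = -A i j := fun i j => by
      simpa using congrFun (congrFun ((mem_so _ _ A).1 hA) i) j
    have hupper : ∀ i j, i < j → A i j = 0 := fun i j hij => congrFun h0 ⟨(i, j), hij⟩
    ext i j
    rcases lt_trichotomy i j with hij | rfl | hij
    · exact hupper i j hij
    · simpa [CharZero.eq_neg_self_iff] using hskew i i
    · simpa [hupper j i hij] using hskew j i
  simpa using LinearMap.finrank_le_finrank_of_injective hf

section TraceForm

variable {n K : Type*} [Fintype n] [DecidableEq n] [Field K]

def traceForm : LinearMap.BilinForm K (so n K) :=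
  LinearMap.mk₂ K (fun X Y => trace ((X : Matrix n n K) * (Y : Matrix n n K)ᵀ))
    (fun _ _ _ => by simp [add_mul]) (fun _ _ _ => by simp)
    (fun _ _ _ => by simp [mul_add]) (fun _ _ _ => by simp)

theorem traceForm_apply (X Y : so n K) :
    traceForm X Y = trace ((X : Matrix n n K) * (Y : Matrix n n K)ᵀ) := rfl

theorem traceForm_lie_self (X Y : so n K) : traceForm ⁅X, Y⁆ Y = 0 := by
  rw [traceForm_apply, (mem_so _ _ _).1 Y.2, LieSubalgebra.coe_bracket, Ring.lie_def, mul_neg,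
    sub_mul, trace_neg, trace_sub, trace_mul_cycle (X : Matrix n n K), sub_self, neg_zero]

theorem traceForm_self_eq_zero [LinearOrder K] [IsStrictOrderedRing K] {X : so n K}
    (hX : traceForm X X = 0) : X = 0 := by
  have hsum : ∑ i, ∑ j, (X : Matrix n n K) i j * (X : Matrix n n K) i j = 0 := by
    simpa [traceForm_apply, trace, mul_apply] using hX
  have hrow : ∀ i, ∑ j, (X : Matrix n n K) i j * (X : Matrix n n K) i j = 0 := fun i =>
    (Finset.sum_eq_zero_iff_of_nonneg fun _ _ => Finset.sum_nonneg fun _ _ => mul_self_nonneg _).1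
      hsum i (Finset.mem_univ i)
  ext i j
  exact mul_self_eq_zero.1 <|
    (Finset.sum_eq_zero_iff_of_nonneg fun _ _ => mul_self_nonneg _).1 (hrow i) j (Finset.mem_univ j)

end TraceForm

end LieAlgebra.Orthogonal

/-- every proper Lie subalgebra of `so(4)` has dimension at
most 4. -/
theorem stmt15 (𝔥 : LieSubalgebra ℝ (Matrix (Fin 4) (Fin 4) ℝ))
    (hsub : 𝔥 ≤ so4) (hne : 𝔥 ≠ so4) :
    Module.finrank ℝ 𝔥 ≤ 4 := by
  rw [show so4 = so (Fin 4) ℝ from rfl] at hsub hne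
  by_contra! hdim
  have hso : finrank ℝ (so (Fin 4) ℝ) ≤ 6 := finrank_so_le.trans (by decide)
  have hlie := (LieSubalgebra.ofLe hsub).lie_mem_of_finrank_le_succ traceForm
    (fun _ => traceForm_self_eq_zero) traceForm_lie_self
    (by rw [← (LieSubalgebra.equivOfLe hsub).toLinearEquiv.finrank_eq]; omega)
  refine hne (le_antisymm hsub ?_)
  rw [← LieSubalgebra.toSubmodule_le_toSubmodule]
  exact so_le_of_lie_mem (by simp) _ fun X hX Y hY => by simpa using hlie ⟨X, hX⟩ ⟨Y, hY⟩
end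

section
/- Let p, q be natural numbers with p ≤ q and n = p + q ≥ 3, and let 𝔥 be a Lie subalgebra of so(p,q). Suppose that either (a) for every spacelike vector v ∈ ℝⁿ (i.e., vᵀη_{p,q}v > 0), every A ∈ so(p,q) with A·v = 0 belongs to 𝔥, or (b) p ≥ 1 and for every timelike vector v ∈ ℝⁿ (i.e., vᵀη_{p,q}v < 0), every A ∈ so(p,q) with A·v = 0 belongs to 𝔥. Then 𝔥 = so(p,q). -/
/-!
`so(p,q)` is spanned by the generators `B i j = d i Eᵢⱼ - d j Eⱼᵢ` of rotations in coordinate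
planes, where `η = diag d`, and `B i j` annihilates every basis vector `eₖ` with `k ∉ {i, j}`.
Hence `B i j` lies in the stabilizer of a spacelike `eₖ` as soon as some spacelike direction `k`
avoids `i` and `j`. Otherwise `i` (say) is spacelike; choosing a third index `k`, `B k j` fixes
`eᵢ`, and `B i j - 2 B k j` fixes the spacelike vector `2 eᵢ + eₖ`. The timelike case is the
spacelike case for `-η`, whose orthogonal Lie algebra is the same.
-/

open Matrix

attribute [local instance 100] LieRing.ofAssociativeRing

/-- The diagonal matrix `η_{p,q} = diag(-1,…,-1,1,…,1)` with `p` minus signs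
and `q` plus signs. -/
def etaPQ (p q : ℕ) : Matrix (Fin (p + q)) (Fin (p + q)) ℝ :=
  Matrix.diagonal fun i => if (i : ℕ) < p then (-1 : ℝ) else 1

/-- The Lie algebra `so(p,q)` of matrices `A` with `Aᵀη_{p,q} + η_{p,q}A = 0`. -/
def soPQ (p q : ℕ) : LieSubalgebra ℝ (Matrix (Fin (p + q)) (Fin (p + q)) ℝ) :=
  skewAdjointMatricesLieSubalgebra (etaPQ p q)

theorem Fintype.exists_ne_ne_of_three_le_card {ι : Type*} [Fintype ι] [DecidableEq ι]
    (hcard : 3 ≤ Fintype.card ι) (i j : ι) : ∃ k, k ≠ i ∧ k ≠ j := by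
  obtain ⟨k, -, hk⟩ := Finset.exists_mem_notMem_of_card_lt_card (s := {i, j}) (t := .univ)
    (Finset.card_le_two.trans_lt (by rwa [Finset.card_univ]))
  exact ⟨k, by simpa [not_or] using hk⟩

namespace IndefiniteOrthogonal

variable {ι : Type*} [DecidableEq ι]

def rotationGenerator (d : ι → ℝ) (i j : ι) : Matrix ι ι ℝ :=
  single i j (d i) - single j i (d j)

lemma rotationGenerator_swap (d : ι → ℝ) (i j : ι) :
    rotationGenerator d j i = -rotationGenerator d i j :=
  (neg_sub _ _).symm

variable [Fintype ι]

def ContainsSpacelikeStabilizers (d : ι → ℝ) (𝔥 : Submodule ℝ (Matrix ι ι ℝ)) : Prop :=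
  ∀ v : ι → ℝ, 0 < v ⬝ᵥ diagonal d *ᵥ v →
    ∀ A ∈ skewAdjointMatricesSubmodule (diagonal d), A *ᵥ v = 0 → A ∈ 𝔥

def ContainsTimelikeStabilizers (d : ι → ℝ) (𝔥 : Submodule ℝ (Matrix ι ι ℝ)) : Prop :=
  ∀ v : ι → ℝ, v ⬝ᵥ diagonal d *ᵥ v < 0 →
    ∀ A ∈ skewAdjointMatricesSubmodule (diagonal d), A *ᵥ v = 0 → A ∈ 𝔥

variable {d : ι → ℝ}

lemma mem_skewAdjointMatricesSubmodule_diagonal_iff {A : Matrix ι ι ℝ} :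
    A ∈ skewAdjointMatricesSubmodule (diagonal d) ↔ ∀ a b, A b a * d b = d a * -A a b := by
  simp only [mem_skewAdjointMatricesSubmodule, Matrix.IsSkewAdjoint, Matrix.IsAdjointPair,
    ← Matrix.ext_iff, mul_diagonal, diagonal_mul, transpose_apply, Matrix.neg_apply]

lemma skewAdjointMatricesSubmodule_diagonal_neg :
    skewAdjointMatricesSubmodule (diagonal (-d)) = skewAdjointMatricesSubmodule (diagonal d) := by
  ext A
  simp only [mem_skewAdjointMatricesSubmodule_diagonal_iff, Pi.neg_apply]
  refine forall₂_congr fun a b => ?_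
  constructor <;> intro h <;> linarith

lemma dotProduct_diagonal_mulVec_self (v : ι → ℝ) :
    v ⬝ᵥ diagonal d *ᵥ v = ∑ a, d a * v a ^ 2 := by
  simp only [dotProduct, mulVec_diagonal]
  exact Finset.sum_congr rfl fun a _ => by ring

lemma rotationGenerator_mem (hd : ∀ i, d i * d i = 1) (i j : ι) :
    rotationGenerator d i j ∈ skewAdjointMatricesSubmodule (diagonal d) := by
  rw [mem_skewAdjointMatricesSubmodule_diagonal_iff]
  intro a b
  simp only [rotationGenerator, Matrix.sub_apply, single_apply, ite_and]
  have := hd a; have := hd b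
  split_ifs <;> subst_vars <;> linarith

lemma rotationGenerator_mulVec (i j : ι) (v : ι → ℝ) :
    rotationGenerator d i j *ᵥ v =
      (d i * v j) • Pi.single i 1 - (d j * v i) • Pi.single j 1 := by
  rw [rotationGenerator, sub_mulVec, single_mulVec_eq, single_mulVec_eq]

lemma skewAdjointMatricesSubmodule_diagonal_le_span (hd : ∀ i, d i * d i = 1) :
    skewAdjointMatricesSubmodule (diagonal d) ≤
      Submodule.span ℝ (Set.range fun ij : ι × ι => rotationGenerator d ij.1 ij.2) := by
  intro A hA
  rw [mem_skewAdjointMatricesSubmodule_diagonal_iff] at hA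
  have hrep :
      A = ∑ ij : ι × ι, (2⁻¹ * d ij.1 * A ij.1 ij.2) • rotationGenerator d ij.1 ij.2 := by
    ext a b
    simp only [rotationGenerator, Matrix.sum_apply, Matrix.smul_apply, Matrix.sub_apply,
      single_apply, smul_eq_mul, mul_sub, Finset.sum_sub_distrib, Fintype.sum_prod_type, mul_ite,
      mul_zero, ite_and, Finset.sum_ite_irrel, Finset.sum_const_zero, Finset.sum_ite_eq',
      Finset.mem_univ, if_true]
    linear_combination (-(A a b)) * hd a + (2⁻¹ * d a) * hA a b
  rw [hrep]
  exact Submodule.sum_mem _ fun ij _ => Submodule.smul_mem _ _ (Submodule.subset_span ⟨ij, rfl⟩)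

section Stabilizers

variable {𝔥 : Submodule ℝ (Matrix ι ι ℝ)} (hd : ∀ i, d i * d i = 1)
  (h𝔥 : ContainsSpacelikeStabilizers d 𝔥)
include hd h𝔥

lemma rotationGenerator_mem_of_pos_of_ne {i j k : ι} (hk : d k = 1) (hki : k ≠ i)
    (hkj : k ≠ j) : rotationGenerator d i j ∈ 𝔥 := by
  refine h𝔥 (Pi.single k 1) ?_ _ (rotationGenerator_mem hd i j) ?_
  · rw [dotProduct_diagonal_mulVec_self, Fintype.sum_eq_single k fun a ha => by simp [ha]]
    simp [hk]
  · rw [rotationGenerator_mulVec]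
    simp [hki.symm, hkj.symm]

lemma rotationGenerator_mem_of_pos_left {i j k : ι} (hi : d i = 1) (hij : i ≠ j) (hki : k ≠ i)
    (hkj : k ≠ j) : rotationGenerator d i j ∈ 𝔥 := by
  have hkj_mem : rotationGenerator d k j ∈ 𝔥 :=
    rotationGenerator_mem_of_pos_of_ne hd h𝔥 hi hki.symm hij
  -- `2 eᵢ + eₖ` is spacelike since `d k ≥ -1`, and `B i j`, `2 B k j` both map it to `-2 d j eⱼ`.
  have hcomb : rotationGenerator d i j - (2 : ℝ) • rotationGenerator d k j ∈ 𝔥 := by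
    refine h𝔥 (Pi.single i 2 + Pi.single k 1) ?_ _ (sub_mem (rotationGenerator_mem hd i j)
      (Submodule.smul_mem _ _ (rotationGenerator_mem hd k j))) ?_
    · rw [dotProduct_diagonal_mulVec_self,
        Fintype.sum_eq_add i k hki.symm fun a ha => by simp [ha]]
      simp [hi, hki, hki.symm]
      nlinarith [hd k]
    · rw [sub_mulVec, smul_mulVec, rotationGenerator_mulVec, rotationGenerator_mulVec]
      simp [hki, hki.symm, hkj.symm, hij.symm]
      module
  simpa using add_mem hcomb (𝔥.smul_mem 2 hkj_mem)

lemma rotationGenerator_mem_of_containsSpacelikeStabilizers (hcard : 3 ≤ Fintype.card ι)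
    (hpos : ∃ m, d m = 1) (i j : ι) : rotationGenerator d i j ∈ 𝔥 := by
  rcases eq_or_ne i j with rfl | hij
  · simp [rotationGenerator]
  obtain ⟨k, hki, hkj⟩ := Fintype.exists_ne_ne_of_three_le_card hcard i j
  by_cases hout : ∃ m, m ≠ i ∧ m ≠ j ∧ d m = 1
  · obtain ⟨m, hmi, hmj, hm⟩ := hout
    exact rotationGenerator_mem_of_pos_of_ne hd h𝔥 hm hmi hmj
  obtain ⟨m, hm⟩ := hpos
  obtain rfl | rfl : m = i ∨ m = j := by
    by_contra! hne
    exact hout ⟨m, hne.1, hne.2, hm⟩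
  · exact rotationGenerator_mem_of_pos_left hd h𝔥 hm hij hki hkj
  · rw [← neg_neg (rotationGenerator d i m), ← rotationGenerator_swap]
    exact neg_mem (rotationGenerator_mem_of_pos_left hd h𝔥 hm hij.symm hkj hki)

theorem skewAdjointMatricesSubmodule_diagonal_le_of_containsSpacelikeStabilizers
    (hcard : 3 ≤ Fintype.card ι) (hpos : ∃ m, d m = 1) :
    skewAdjointMatricesSubmodule (diagonal d) ≤ 𝔥 :=
  (skewAdjointMatricesSubmodule_diagonal_le_span hd).trans <| Submodule.span_le.2 <|
    Set.range_subset_iff.2 fun ij =>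
      rotationGenerator_mem_of_containsSpacelikeStabilizers hd h𝔥 hcard hpos ij.1 ij.2

end Stabilizers

lemma ContainsTimelikeStabilizers.neg {𝔥 : Submodule ℝ (Matrix ι ι ℝ)}
    (h𝔥 : ContainsTimelikeStabilizers d 𝔥) : ContainsSpacelikeStabilizers (-d) 𝔥 := by
  intro v hv A hA hAv
  rw [skewAdjointMatricesSubmodule_diagonal_neg] at hA
  rw [show diagonal (-d) = -diagonal d from (diagonal_neg d).symm, neg_mulVec, dotProduct_neg,
    neg_pos] at hv
  exact h𝔥 v hv A hA hAv

end IndefiniteOrthogonal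

/-- Lie-algebra form of Lemma 1 of the appendix: if a Lie
subalgebra `𝔥` of `so(p,q)` (with `p ≤ q`, `p + q ≥ 3`) contains, for every
spacelike vector `v`, every member of `so(p,q)` annihilating `v`, or `p ≥ 1`
and `𝔥` contains, for every timelike vector `v`, every member of `so(p,q)`
annihilating `v`, then `𝔥 = so(p,q)`. -/
theorem stmt16 (p q : ℕ) (hpq : p ≤ q) (hn : 3 ≤ p + q)
    (𝔥 : LieSubalgebra ℝ (Matrix (Fin (p + q)) (Fin (p + q)) ℝ))
    (hsub : 𝔥 ≤ soPQ p q)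
    (hyp :
      (∀ v : Fin (p + q) → ℝ, 0 < v ⬝ᵥ (etaPQ p q).mulVec v →
        ∀ A ∈ soPQ p q, A.mulVec v = 0 → A ∈ 𝔥) ∨
      (1 ≤ p ∧ ∀ v : Fin (p + q) → ℝ, v ⬝ᵥ (etaPQ p q).mulVec v < 0 →
        ∀ A ∈ soPQ p q, A.mulVec v = 0 → A ∈ 𝔥)) :
    𝔥 = soPQ p q := by
  let d : Fin (p + q) → ℝ := fun i => if (i : ℕ) < p then -1 else 1
  have hd : ∀ i, d i * d i = 1 := fun i => by by_cases h : (i : ℕ) < p <;> simp [d, h]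
  have hcard : 3 ≤ Fintype.card (Fin (p + q)) := by rwa [Fintype.card_fin]
  refine le_antisymm hsub fun A (hA : A ∈ skewAdjointMatricesSubmodule (diagonal d)) => ?_
  rcases hyp with hspace | ⟨hp, htime⟩
  · have hlast : d ⟨p + q - 1, by omega⟩ = 1 := if_neg (by simp only; omega)
    exact
      IndefiniteOrthogonal.skewAdjointMatricesSubmodule_diagonal_le_of_containsSpacelikeStabilizers
        (𝔥 := 𝔥.toSubmodule) hd hspace hcard ⟨_, hlast⟩ hA
  · have hfirst : (-d) ⟨0, by omega⟩ = 1 := by simp [d, show 0 < p by omega]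
    rw [← IndefiniteOrthogonal.skewAdjointMatricesSubmodule_diagonal_neg] at hA
    exact
      IndefiniteOrthogonal.skewAdjointMatricesSubmodule_diagonal_le_of_containsSpacelikeStabilizers
        (𝔥 := 𝔥.toSubmodule) (fun i => (neg_mul_neg _ _).trans (hd i))
        (IndefiniteOrthogonal.ContainsTimelikeStabilizers.neg htime) hcard ⟨_, hfirst⟩ hA
end

section
/- There exists a Lie subalgebra 𝔥 of so(2,2) with 𝔥 ≠ so(2,2) and dim 𝔥 = 5 (one less than dim so(2,2) = 6). -/
/-!
The subalgebra is the stabilizer in `so(2,2)` of the totally null plane `U = span {l, n}`;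
stabilizers of a subspace are automatically closed under the commutator. A bivector `u ∧ v`,
acting by `w ↦ ⟪v, w⟫ u - ⟪u, w⟫ v`, is skew-adjoint, and when `u ∈ U` it maps `U` into `ℝ u`
because `U` is totally null. This gives the five independent elements `l ∧ n`, `l ∧ x₁`,
`l ∧ x₂`, `n ∧ x₁`, `n ∧ x₂` of the stabilizer. The rotation `t₁ ∧ t₂` sends `l` to `t₂ ∉ U`, so
the stabilizer is proper, and as `so(2,2)` is spanned by the six coordinate bivectors its
dimension lies between `5` and `6 - 1`.
-/

open Matrix

attribute [local instance 100] LieRing.ofAssociativeRing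

/-- The matrix `diag(-1,-1,1,1)` of the signature `(2,2)` form. -/
def eta22 : Matrix (Fin 4) (Fin 4) ℝ :=
  Matrix.diagonal ![(-1 : ℝ), -1, 1, 1]

/-- The Lie algebra `so(2,2)` of matrices `A` with `Aᵀη₂,₂ + η₂,₂A = 0`. -/
def so22 : LieSubalgebra ℝ (Matrix (Fin 4) (Fin 4) ℝ) :=
  skewAdjointMatricesLieSubalgebra eta22

section Bivector

variable {ι R : Type*} [Fintype ι] [CommRing R]

def wedgeMatrix (J : Matrix ι ι R) (u v : ι → R) : Matrix ι ι R :=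
  vecMulVec u (J *ᵥ v) - vecMulVec v (J *ᵥ u)

theorem wedgeMatrix_mulVec (J : Matrix ι ι R) (u v w : ι → R) :
    wedgeMatrix J u v *ᵥ w = ((J *ᵥ v) ⬝ᵥ w) • u - ((J *ᵥ u) ⬝ᵥ w) • v := by
  simp only [wedgeMatrix, sub_mulVec, vecMulVec_mulVec, op_smul_eq_smul]

theorem isSkewAdjoint_wedgeMatrix {J : Matrix ι ι R} (hJ : Jᵀ = J) (u v : ι → R) :
    J.IsSkewAdjoint (wedgeMatrix J u v) := by
  have hvecMul (w : ι → R) : w ᵥ* J = J *ᵥ w := by rw [← vecMul_transpose, hJ]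
  simp only [Matrix.IsSkewAdjoint, Matrix.IsAdjointPair, wedgeMatrix, transpose_sub,
    transpose_vecMulVec, sub_mul, vecMulVec_mul, hvecMul, mul_sub, mul_vecMulVec, neg_sub]

variable [DecidableEq ι]

def stabilizerLieSubalgebra (U : Submodule R (ι → R)) : LieSubalgebra R (Matrix ι ι R) where
  carrier := {A | ∀ w ∈ U, A *ᵥ w ∈ U}
  zero_mem' w _ := by simpa only [zero_mulVec] using U.zero_mem
  add_mem' hA hB w hw := by simpa only [add_mulVec] using U.add_mem (hA w hw) (hB w hw)
  smul_mem' c A hA w hw := by simpa only [smul_mulVec] using U.smul_mem c (hA w hw)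
  lie_mem' {A B} hA hB w hw := by
    rw [Ring.lie_def, sub_mulVec, ← mulVec_mulVec, ← mulVec_mulVec]
    exact U.sub_mem (hA _ (hB w hw)) (hB _ (hA w hw))

theorem wedgeMatrix_mem_stabilizerLieSubalgebra {J : Matrix ι ι R} {U : Submodule R (ι → R)}
    {u : ι → R} (hu : u ∈ U) (huU : ∀ w ∈ U, (J *ᵥ u) ⬝ᵥ w = 0) (v : ι → R) :
    wedgeMatrix J u v ∈ stabilizerLieSubalgebra U := fun w hw => by
  rw [wedgeMatrix_mulVec, huU w hw, zero_smul, sub_zero]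
  exact U.smul_mem _ hu

end Bivector

namespace SO22

local infix:70 " ⋏ " => wedgeMatrix eta22

def t₁ : Fin 4 → ℝ := Pi.single 0 1
def t₂ : Fin 4 → ℝ := Pi.single 1 1
def x₁ : Fin 4 → ℝ := Pi.single 2 1
def x₂ : Fin 4 → ℝ := Pi.single 3 1
def l : Fin 4 → ℝ := t₁ + x₁
def n : Fin 4 → ℝ := t₂ + x₂

def nullPlane : Submodule ℝ (Fin 4 → ℝ) := Submodule.span ℝ {l, n}

def nullPlaneStabilizer : LieSubalgebra ℝ (Matrix (Fin 4) (Fin 4) ℝ) :=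
  so22 ⊓ stabilizerLieSubalgebra nullPlane

theorem wedgeMatrix_mem_so22 (u v : Fin 4 → ℝ) : u ⋏ v ∈ so22 := by
  rw [so22, mem_skewAdjointMatricesLieSubalgebra, mem_skewAdjointMatricesSubmodule]
  exact isSkewAdjoint_wedgeMatrix (diagonal_transpose _) u v

theorem eta22_mulVec_dotProduct_eq_zero {u w : Fin 4 → ℝ} (hu : u ∈ nullPlane)
    (hw : w ∈ nullPlane) : (eta22 *ᵥ u) ⬝ᵥ w = 0 := by
  obtain ⟨a, b, rfl⟩ := Submodule.mem_span_pair.mp hu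
  obtain ⟨c, d, rfl⟩ := Submodule.mem_span_pair.mp hw
  simp [eta22, l, n, t₁, t₂, x₁, x₂, dotProduct, Fin.sum_univ_four, mulVec_diagonal]

def nullPlaneBivectors : Fin 5 → Matrix (Fin 4) (Fin 4) ℝ :=
  ![l ⋏ n, l ⋏ x₁, l ⋏ x₂, n ⋏ x₁, n ⋏ x₂]

theorem nullPlaneBivectors_mem (i : Fin 5) : nullPlaneBivectors i ∈ nullPlaneStabilizer := by
  have hl : l ∈ nullPlane := Submodule.subset_span (by simp)
  have hn : n ∈ nullPlane := Submodule.subset_span (by simp)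
  have hmem {u : Fin 4 → ℝ} (hu : u ∈ nullPlane) (v : Fin 4 → ℝ) :
      u ⋏ v ∈ nullPlaneStabilizer :=
    ⟨wedgeMatrix_mem_so22 u v, wedgeMatrix_mem_stabilizerLieSubalgebra hu
      (fun _ hw => eta22_mulVec_dotProduct_eq_zero hu hw) v⟩
  fin_cases i
  exacts [hmem hl n, hmem hl x₁, hmem hl x₂, hmem hn x₁, hmem hn x₂]

theorem linearIndependent_nullPlaneBivectors : LinearIndependent ℝ nullPlaneBivectors := by
  refine Fintype.linearIndependent_iff.mpr fun c hc i => ?_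
  have h01 := congrFun₂ hc 0 1
  have h02 := congrFun₂ hc 0 2
  have h03 := congrFun₂ hc 0 3
  have h12 := congrFun₂ hc 1 2
  have h13 := congrFun₂ hc 1 3
  fin_cases i <;>
    simp [nullPlaneBivectors, Fin.sum_univ_five, wedgeMatrix, eta22, l, n, t₁, t₂, x₁, x₂,
      vecMulVec_apply, mulVec_diagonal] at h01 h02 h03 h12 h13 ⊢ <;> linarith

theorem wedgeMatrix_t₁_t₂_notMem_stabilizerLieSubalgebra :
    t₁ ⋏ t₂ ∉ stabilizerLieSubalgebra nullPlane := by
  intro h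
  have hl : (t₁ ⋏ t₂) *ᵥ l = t₂ := by
    simp [wedgeMatrix_mulVec, eta22, l, t₁, t₂, x₁, dotProduct, Fin.sum_univ_four,
      mulVec_diagonal]
  have ht₂ : t₂ ∈ nullPlane := hl ▸ h l (Submodule.subset_span (by simp))
  obtain ⟨a, b, hab⟩ := Submodule.mem_span_pair.mp ht₂
  have hb₁ : b = 1 := by simpa [l, n, t₁, t₂, x₁, x₂] using congrFun hab 1
  have hb₀ : b = 0 := by simpa [l, n, t₁, t₂, x₁, x₂] using congrFun hab 3
  exact one_ne_zero (hb₁.symm.trans hb₀)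

def coordinateBivectors : Fin 6 → Matrix (Fin 4) (Fin 4) ℝ :=
  ![t₁ ⋏ t₂, t₁ ⋏ x₁, t₁ ⋏ x₂, t₂ ⋏ x₁, t₂ ⋏ x₂, x₁ ⋏ x₂]

theorem so22_le_span_coordinateBivectors :
    (so22 : Submodule ℝ (Matrix (Fin 4) (Fin 4) ℝ)) ≤
      Submodule.span ℝ (Set.range coordinateBivectors) := by
  intro A hA
  rw [LieSubalgebra.mem_toSubmodule, so22, mem_skewAdjointMatricesLieSubalgebra,
    mem_skewAdjointMatricesSubmodule] at hA
  rw [Submodule.mem_span_range_iff_exists_fun]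
  -- the coefficient of the bivector on coordinates `i < j` is `ηⱼ Aᵢⱼ`
  refine ⟨![-A 0 1, A 0 2, A 0 3, A 1 2, A 1 3, A 2 3], ?_⟩
  ext i j
  have skew : (Aᵀ * eta22) i j = (eta22 * -A) i j := congrFun₂ hA i j
  simp only [eta22, mul_diagonal, diagonal_mul, transpose_apply] at skew
  fin_cases i <;> fin_cases j <;>
    simp [coordinateBivectors, Fin.sum_univ_six, wedgeMatrix, eta22, t₁, t₂, x₁, x₂,
      vecMulVec_apply] at skew ⊢ <;> linarith

theorem finrank_so22_le : Module.finrank ℝ so22 ≤ 6 :=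
  (Submodule.finrank_mono so22_le_span_coordinateBivectors).trans
    ((finrank_range_le_card coordinateBivectors).trans_eq (Fintype.card_fin 6))

theorem nullPlaneStabilizer_lt_so22 :
    (nullPlaneStabilizer : Submodule ℝ (Matrix (Fin 4) (Fin 4) ℝ)) < so22 :=
  SetLike.lt_iff_le_and_exists.mpr ⟨inf_le_left, t₁ ⋏ t₂, wedgeMatrix_mem_so22 t₁ t₂,
    fun h => wedgeMatrix_t₁_t₂_notMem_stabilizerLieSubalgebra h.2⟩

theorem finrank_nullPlaneStabilizer : Module.finrank ℝ nullPlaneStabilizer = 5 := by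
  have hlt := (Submodule.finrank_lt_finrank_of_lt nullPlaneStabilizer_lt_so22).trans_le
    finrank_so22_le
  have hspan : Submodule.span ℝ (Set.range nullPlaneBivectors) ≤ nullPlaneStabilizer :=
    Submodule.span_le.mpr (Set.range_subset_iff.mpr nullPlaneBivectors_mem)
  have hge := Submodule.finrank_mono hspan
  rw [finrank_span_eq_card linearIndependent_nullPlaneBivectors, Fintype.card_fin] at hge
  exact le_antisymm (Nat.le_of_lt_succ hlt) hge

end SO22

/-- `so(2,2)` admits a proper Lie subalgebra of dimension 5
(one less than `dim so(2,2) = 6`). -/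
theorem stmt18 :
    ∃ 𝔥 : LieSubalgebra ℝ (Matrix (Fin 4) (Fin 4) ℝ),
      𝔥 ≤ so22 ∧ 𝔥 ≠ so22 ∧ Module.finrank ℝ 𝔥 = 5 :=
  ⟨SO22.nullPlaneStabilizer, inf_le_left,
    fun h => SO22.nullPlaneStabilizer_lt_so22.ne (congrArg _ h), SO22.finrank_nullPlaneStabilizer⟩
end

section
/- For every natural number n and every family of real coefficients a₀, a₁, …, aₙ, if for all real x > 0 one has Σ_{k=0}^{n} aₖ · (d^k/dx^k)(e^{−1/x}) = 0 (where d^k/dx^k denotes the k-th iterated derivative of the function x ↦ exp(−x⁻¹)), then a₀ = a₁ = ⋯ = aₙ = 0. In other words, the iterated derivatives of x ↦ e^{−1/x} are linearly independent as functions on (0, ∞). -/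
/-!
The `k`-th derivative of `e^{-1/x}` is `P_k(1/x) e^{-1/x}` for polynomials `P_k` with
`P_0 = 1`, `P_{k+1} = X² (P_k - P_k')`, so `deg P_k = 2k`. Substituting `y = 1/x` and
cancelling `e^{-y}`, a vanishing combination `∑ aₖ (e^{-1/x})⁽ᵏ⁾` on `(0, ∞)` becomes a
polynomial `∑ aₖ P_k` with infinitely many roots, hence zero; polynomials of pairwise
distinct degrees are linearly independent, so every `aₖ` vanishes.
-/

open Polynomial

theorem Polynomial.linearIndependent_of_degree_injective {R ι : Type*} [Ring R] [IsDomain R]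
    {p : ι → R[X]} (hp : ∀ i, p i ≠ 0) (hdeg : Function.Injective (degree ∘ p)) :
    LinearIndependent R p := by
  refine linearIndependent_iff'.mpr fun s g hsum i hi => by_contra fun hgi => ?_
  have hdeg_smul : ∀ j, g j ≠ 0 → (g j • p j).degree = (p j).degree := fun j hj =>
    degree_smul_of_isRightRegular_leadingCoeff hj
      (IsRegular.of_ne_zero (leadingCoeff_ne_zero.mpr (hp j))).right
  have hdisjoint : Set.Pairwise {j | j ∈ s ∧ g j • p j ≠ 0}
      (Function.onFun Ne (degree ∘ fun j => g j • p j)) := by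
    rintro j ⟨-, hj⟩ k ⟨-, hk⟩ hjk
    simp only [Function.onFun, Function.comp_apply, hdeg_smul j (left_ne_zero_of_smul hj),
      hdeg_smul k (left_ne_zero_of_smul hk)]
    exact hdeg.ne hjk
  have hsup := degree_sum_eq_of_disjoint _ s hdisjoint
  rw [hsum, degree_zero] at hsup
  have := (Finset.le_sup (f := fun j => (g j • p j).degree) hi).trans_eq hsup.symm
  rw [hdeg_smul i hgi, le_bot_iff, degree_eq_bot] at this
  exact hp i this

noncomputable def expNegInvPoly : ℕ → ℝ[X]
  | 0 => 1
  | k + 1 => X ^ 2 * (expNegInvPoly k - derivative (expNegInvPoly k))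

theorem degree_expNegInvPoly (k : ℕ) : (expNegInvPoly k).degree = (2 * k : ℕ) := by
  induction k with
  | zero => simp [expNegInvPoly]
  | succ k ih =>
    have hne : expNegInvPoly k ≠ 0 := by
      rw [← degree_ne_bot, ih]; exact WithBot.coe_ne_bot
    rw [expNegInvPoly, degree_mul, degree_X_pow,
      degree_sub_eq_left_of_degree_lt (degree_derivative_lt hne), ih]
    norm_cast
    ring

theorem expNegInvPoly_ne_zero (k : ℕ) : expNegInvPoly k ≠ 0 := by
  rw [← degree_ne_bot, degree_expNegInvPoly]; exact WithBot.coe_ne_bot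

theorem linearIndependent_expNegInvPoly : LinearIndependent ℝ expNegInvPoly :=
  linearIndependent_of_degree_injective expNegInvPoly_ne_zero fun j k hjk => by
    simp only [Function.comp_apply, degree_expNegInvPoly, Nat.cast_inj] at hjk
    omega

theorem hasDerivAt_eval_inv_mul_exp_neg_inv (P : ℝ[X]) {x : ℝ} (hx : x ≠ 0) :
    HasDerivAt (fun y => P.eval y⁻¹ * Real.exp (-y⁻¹))
      ((X ^ 2 * (P - derivative P)).eval x⁻¹ * Real.exp (-x⁻¹)) x := by
  have hinv : HasDerivAt (fun y : ℝ => y⁻¹) (-(x ^ 2)⁻¹) x := hasDerivAt_inv hx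
  have hP := (P.hasDerivAt x⁻¹).comp x hinv
  have hexp := (Real.hasDerivAt_exp (-x⁻¹)).comp x hinv.neg
  refine (hP.mul hexp).congr_deriv ?_
  simp only [eval_mul, eval_pow, eval_X, eval_sub, Function.comp_apply, Pi.neg_apply]
  ring

theorem iteratedDeriv_exp_neg_inv (k : ℕ) {x : ℝ} (hx : x ≠ 0) :
    iteratedDeriv k (fun t : ℝ => Real.exp (-t⁻¹)) x
      = (expNegInvPoly k).eval x⁻¹ * Real.exp (-x⁻¹) := by
  induction k generalizing x with
  | zero => simp [expNegInvPoly]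
  | succ k ih =>
    have hloc : iteratedDeriv k (fun t : ℝ => Real.exp (-t⁻¹))
        =ᶠ[nhds x] fun y => (expNegInvPoly k).eval y⁻¹ * Real.exp (-y⁻¹) :=
      (isOpen_ne.eventually_mem hx).mono fun y hy => ih hy
    rw [iteratedDeriv_succ, hloc.deriv_eq,
      (hasDerivAt_eval_inv_mul_exp_neg_inv _ hx).deriv, expNegInvPoly]

/-- the iterated derivatives of `x ↦ exp (-1/x)` are linearly
independent as functions on `(0, ∞)`: if `∑_{k=0}^{n} aₖ (d^k/dx^k) e^{-1/x} = 0`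
for all `x > 0`, then all the coefficients `aₖ` vanish. -/
theorem stmt19 (n : ℕ) (a : ℕ → ℝ)
    (h : ∀ x : ℝ, 0 < x →
      ∑ k ∈ Finset.range (n + 1),
        a k * iteratedDeriv k (fun t : ℝ => Real.exp (-t⁻¹)) x = 0) :
    ∀ k ≤ n, a k = 0 := by
  set Q : ℝ[X] := ∑ k ∈ Finset.range (n + 1), a k • expNegInvPoly k
  have hroot : ∀ y : ℝ, 0 < y → Q.IsRoot y := fun y hy => by
    have hy' := h y⁻¹ (inv_pos.mpr hy)
    simp only [iteratedDeriv_exp_neg_inv _ (inv_ne_zero hy.ne'), inv_inv, ← mul_assoc,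
      ← Finset.sum_mul, mul_eq_zero, Real.exp_ne_zero, or_false] at hy'
    simpa [Q, eval_finsetSum] using hy'
  have hQ : Q = 0 := eq_zero_of_infinite_isRoot Q ((Set.Ioi_infinite 0).mono hroot)
  intro k hk
  exact linearIndependent_iff'.mp linearIndependent_expNegInvPoly _ a hQ k
    (Finset.mem_range_succ_iff.mpr hk)
end
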